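/- arXiv:1201.6002 — 2 statements merged into one kernel-verified Lean document; each statement's English description precedes it below -/
import Mathlib

section
/- Mean Value Trace Inequality. Let I be an interval of the real line, let g : I → ℝ be weakly increasing, and let h : I → ℝ be differentiable with convex derivative h'. Then for all d×d Hermitian matrices A, B whose eigenvalues lie in I, tr̄[(g(A) − g(B))·(h(A) − h(B))] ≤ (1/2) tr̄[(g(A) − g(B))·(A − B)·(h'(A) + h'(B))]. If instead h' is concave, the inequality is reversed. The same inequalities hold with the normalized trace tr̄ replaced by the standard trace. -/
open MeasureTheory
open scoped ComplexOrder Classical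

noncomputable instance {m n : ℕ} : MeasurableSpace (Matrix (Fin m) (Fin n) ℂ) :=
  inferInstanceAs (MeasurableSpace (Fin m → Fin n → ℂ))

/-- The spectral norm (largest singular value) of a complex matrix. -/
noncomputable def specNorm {m n : ℕ} (A : Matrix (Fin m) (Fin n) ℂ) : ℝ :=
  ‖LinearMap.toContinuousLinearMap (Matrix.toEuclideanLin A)‖

/-- The largest eigenvalue of a Hermitian matrix, via the Rayleigh quotient. -/
noncomputable def lmax {d : ℕ} (A : Matrix (Fin d) (Fin d) ℂ) : ℝ :=
  ⨆ x : Metric.sphere (0 : EuclideanSpace ℂ (Fin d)) 1,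
    (inner ℂ ((x : EuclideanSpace ℂ (Fin d))) (Matrix.toEuclideanLin A x) : ℂ).re

/-- The smallest eigenvalue of a Hermitian matrix, via the Rayleigh quotient. -/
noncomputable def lmin {d : ℕ} (A : Matrix (Fin d) (Fin d) ℂ) : ℝ :=
  ⨅ x : Metric.sphere (0 : EuclideanSpace ℂ (Fin d)) 1,
    (inner ℂ ((x : EuclideanSpace ℂ (Fin d))) (Matrix.toEuclideanLin A x) : ℂ).re

/-- The matrix exponential. -/
noncomputable def mexp {d : ℕ} (A : Matrix (Fin d) (Fin d) ℂ) : Matrix (Fin d) (Fin d) ℂ :=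
  NormedSpace.exp A

/-- The Schatten `p`-norm `(tr |B|^p)^(1/p)` of a complex matrix, computed via the
eigenvalues of `Bᴴ * B`. -/
noncomputable def schattenNorm {d : ℕ} (p : ℝ) (B : Matrix (Fin d) (Fin d) ℂ) : ℝ :=
  (∑ i, (Matrix.posSemidef_conjTranspose_mul_self B).isHermitian.eigenvalues i ^ (p / 2)) ^ (1 / p)

/-- The positive-semidefinite square root of a psd matrix (junk value `0` otherwise). -/
noncomputable def psdSqrt {d : ℕ} (M : Matrix (Fin d) (Fin d) ℂ) : Matrix (Fin d) (Fin d) ℂ :=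
  if h : M.PosSemidef then
    h.1.eigenvectorUnitary.1 * Matrix.diagonal ((↑) ∘ Real.sqrt ∘ h.1.eigenvalues) *
      (star h.1.eigenvectorUnitary : Matrix (Fin d) (Fin d) ℂ)
  else 0

/-- The entrywise expectation of a random matrix. -/
noncomputable def matMean {Ω : Type*} [MeasurableSpace Ω] (μ : Measure Ω) {d : ℕ}
    (X : Ω → Matrix (Fin d) (Fin d) ℂ) : Matrix (Fin d) (Fin d) ℂ :=
  Matrix.of fun i j => ∫ ω, X ω i j ∂μ

/-- The normalized trace mgf `θ ↦ 𝔼 tr̄ exp (θ X)` of a random Hermitian matrix. -/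
noncomputable def traceMgf {Ω : Type*} [MeasurableSpace Ω] (μ : Measure Ω) {d : ℕ}
    (X : Ω → Matrix (Fin d) (Fin d) ℂ) (θ : ℝ) : ℝ :=
  ∫ ω, (Matrix.trace (mexp ((θ : ℂ) • X ω))).re / d ∂μ

/-- `(X, X') = (Ψ(Z), Ψ(Z'))` is a matrix Stein pair with scale factor `α`:
`(Z, Z')` is an exchangeable pair, `Ψ` takes Hermitian values,
`𝔼[X - X' ∣ Z] = α X` a.s., `α ∈ (0, 1]`, and `𝔼‖X‖² < ∞`. -/
structure IsMatrixSteinPair {Ω 𝒵 : Type*} [MeasurableSpace Ω] [MeasurableSpace 𝒵]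
    {d : ℕ} (μ : Measure Ω) (Z Z' : Ω → 𝒵) (Ψ : 𝒵 → Matrix (Fin d) (Fin d) ℂ)
    (α : ℝ) : Prop where
  measurable_fst : Measurable Z
  measurable_snd : Measurable Z'
  measurable_psi : ∀ i j, Measurable fun z => Ψ z i j
  hermitian : ∀ z, (Ψ z).IsHermitian
  exchangeable : μ.map (fun ω => (Z ω, Z' ω)) = μ.map fun ω => (Z' ω, Z ω)
  alpha_pos : 0 < α
  alpha_le_one : α ≤ 1
  stein : ∀ i j,
    μ[(fun ω => Ψ (Z ω) i j - Ψ (Z' ω) i j) | MeasurableSpace.comap Z inferInstance]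
      =ᵐ[μ] fun ω => (α : ℂ) * Ψ (Z ω) i j
  memLp_two : ∀ i j, MemLp (fun ω => Ψ (Z ω) i j) 2 μ

/-- The conditional variance `Δ_X = (1/(2α)) 𝔼[(X - X')² ∣ Z]` of a matrix Stein pair,
defined entrywise via conditional expectation with respect to `σ(Z)`. -/
noncomputable def condVar {Ω 𝒵 : Type*} [MeasurableSpace Ω] [MeasurableSpace 𝒵]
    {d : ℕ} (μ : Measure Ω) (Z Z' : Ω → 𝒵) (Ψ : 𝒵 → Matrix (Fin d) (Fin d) ℂ)
    (α : ℝ) : Ω → Matrix (Fin d) (Fin d) ℂ := fun ω =>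
  Matrix.of fun i j => (1 / (2 * α) : ℂ) *
    (μ[(fun ω' => ((Ψ (Z ω') - Ψ (Z' ω')) * (Ψ (Z ω') - Ψ (Z' ω'))) i j)
      | MeasurableSpace.comap Z inferInstance]) ω

/-- `s ↦ s log s` (with `0 log 0 = 0`) applied to the eigenvalues of a Hermitian matrix
(junk value `0` otherwise). -/
noncomputable def matLogSelf {d : ℕ} (M : Matrix (Fin d) (Fin d) ℂ) : Matrix (Fin d) (Fin d) ℂ :=
  if h : M.IsHermitian then h.cfc (fun x => x * Real.log x) else 0

/-! Diagonalize `A = ∑ λᵢ uᵢuᵢ*` and `B = ∑ μⱼ vⱼvⱼ*`. The trace of a product of functions of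
`A` and of `B` that is cyclically of the form `f(A) k(B)` equals `∑ᵢⱼ |⟨uᵢ, vⱼ⟩|² f(λᵢ) k(μⱼ)`,
and both sides of the inequality expand into such products. So both sides are sums, with the
same nonnegative weights `|⟨uᵢ, vⱼ⟩|²`, of scalar expressions in `(x, y) = (λᵢ, μⱼ)`, and it
suffices to prove `(g x - g y)(h x - h y) ≤ ½ (g x - g y)(x - y)(h' x + h' y)`. As `g` is
monotone, this follows from the trapezoid bound `h x - h y ≤ ½ (x - y)(h' x + h' y)` for `y ≤ x`,
which holds because the convex `h'` lies below its chord on `[y, x]`; the concave case is the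
convex one for `-h`. -/

section Scalar

open Set

variable {I : Set ℝ} {g h h' : ℝ → ℝ} {x y : ℝ}

lemma sub_le_mul_add_div_two_of_convexOn_deriv (hyx : y ≤ x)
    (hderiv : ∀ t ∈ Icc y x, HasDerivAt h (h' t) t) (hconv : ConvexOn ℝ (Icc y x) h') :
    h x - h y ≤ (x - y) * (h' x + h' y) / 2 := by
  rcases hyx.eq_or_lt with rfl | hlt
  · simp
  -- `F' = (x - y) * (chord of h' over [y, x] - h')`, which is nonnegative by convexity.
  set F : ℝ → ℝ := fun t => (x - y) * (h' y * t - h t) + (h' x - h' y) * (t - y) ^ 2 / 2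
  have hF : ∀ t ∈ Icc y x,
      HasDerivAt F ((x - y) * (h' y - h' t) + (h' x - h' y) * (t - y)) t := by
    intro t ht
    have := (((hasDerivAt_id t).const_mul (h' y)).sub (hderiv t ht)).const_mul (x - y) |>.add
      ((((hasDerivAt_id t).sub_const y).pow 2).const_mul (h' x - h' y) |>.div_const 2)
    exact this.congr_deriv (by simp only [id, mul_one, Nat.cast_ofNat]; ring)
  have hmono : MonotoneOn F (Icc y x) := by
    refine monotoneOn_of_hasDerivWithinAt_nonneg (convex_Icc y x)
      (fun t ht => (hF t ht).continuousAt.continuousWithinAt)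
      (fun t ht => (hF t (interior_subset ht)).hasDerivWithinAt) fun t ht => ?_
    rw [interior_Icc] at ht
    have hchord := hconv.secant_mono_aux1 (left_mem_Icc.2 hyx) (right_mem_Icc.2 hyx) ht.1 ht.2
    linarith
  have hFyx := hmono (left_mem_Icc.2 hyx) (right_mem_Icc.2 hyx) hyx
  simp only [F] at hFyx
  refine le_of_mul_le_mul_left ?_ (sub_pos.2 hlt)
  nlinarith

lemma mul_sub_le_of_convexOn_deriv (hg : MonotoneOn g I)
    (hderiv : ∀ t ∈ I, HasDerivAt h (h' t) t) (hconv : ConvexOn ℝ I h') (hx : x ∈ I) (hy : y ∈ I) :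
    (g x - g y) * (h x - h y) ≤ 1 / 2 * ((g x - g y) * (x - y) * (h' x + h' y)) := by
  wlog hyx : y ≤ x generalizing x y
  · convert this hy hx (le_of_not_ge hyx) using 1 <;> ring
  have hIcc : Icc y x ⊆ I := hconv.1.ordConnected.out hy hx
  have htrap := sub_le_mul_add_div_two_of_convexOn_deriv hyx (fun t ht => hderiv t (hIcc ht))
    (hconv.subset hIcc (convex_Icc y x))
  calc (g x - g y) * (h x - h y) ≤ (g x - g y) * ((x - y) * (h' x + h' y) / 2) :=
        mul_le_mul_of_nonneg_left htrap (sub_nonneg.2 (hg hy hx hyx))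
    _ = 1 / 2 * ((g x - g y) * (x - y) * (h' x + h' y)) := by ring

lemma mul_sub_ge_of_concaveOn_deriv (hg : MonotoneOn g I)
    (hderiv : ∀ t ∈ I, HasDerivAt h (h' t) t) (hconc : ConcaveOn ℝ I h') (hx : x ∈ I) (hy : y ∈ I) :
    1 / 2 * ((g x - g y) * (x - y) * (h' x + h' y)) ≤ (g x - g y) * (h x - h y) := by
  have := mul_sub_le_of_convexOn_deriv hg (fun t ht => (hderiv t ht).neg) hconc.neg hx hy
  simp only [Pi.neg_apply] at this
  linarith

end Scalar

namespace Matrix.IsHermitian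

variable {n 𝕜 : Type*} [RCLike 𝕜] [Fintype n] [DecidableEq n] {A B : Matrix n n 𝕜}

lemma cfc_mul_cfc (hA : A.IsHermitian) (f k : ℝ → ℝ) :
    hA.cfc f * hA.cfc k = hA.cfc (fun x => f x * k x) := by
  simp only [← hA.cfc_eq]
  exact (cfc_mul f k A (A.finite_real_spectrum.continuousOn f)
    (A.finite_real_spectrum.continuousOn k)).symm

lemma mul_cfc_mul_cfc (hA : A.IsHermitian) (X : Matrix n n 𝕜) (f k : ℝ → ℝ) :
    X * hA.cfc f * hA.cfc k = X * hA.cfc (fun x => f x * k x) := by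
  rw [Matrix.mul_assoc, cfc_mul_cfc]

lemma cfc_self (hA : A.IsHermitian) : hA.cfc (fun x => x) = A := by
  rw [← hA.cfc_eq, cfc_id' ℝ A]

lemma cfc_const_one (hA : A.IsHermitian) : hA.cfc (fun _ => 1) = 1 := by
  rw [← hA.cfc_eq, _root_.cfc_const_one ℝ A]

/-- `|⟨uᵢ, vⱼ⟩|²` for the eigenvector bases `u` of `A` and `v` of `B`. -/
noncomputable def eigenOverlap (hA : A.IsHermitian) (hB : B.IsHermitian) (i j : n) : ℝ :=
  ‖(star (hA.eigenvectorUnitary : Matrix n n 𝕜) * hB.eigenvectorUnitary) i j‖ ^ 2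

lemma eigenOverlap_nonneg (hA : A.IsHermitian) (hB : B.IsHermitian) (i j : n) :
    0 ≤ eigenOverlap hA hB i j := by
  unfold eigenOverlap; positivity

section Pairing

variable (hA : A.IsHermitian) (hB : B.IsHermitian)

lemma re_trace_cfc_mul_cfc (f k : ℝ → ℝ) :
    RCLike.re (hA.cfc f * hB.cfc k).trace =
      ∑ i, ∑ j, eigenOverlap hA hB i j * (f (hA.eigenvalues i) * k (hB.eigenvalues j)) := by
  set W : Matrix n n 𝕜 := star (hA.eigenvectorUnitary : Matrix n n 𝕜) * hB.eigenvectorUnitary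
  have hcycle : (hA.cfc f * hB.cfc k).trace = (diagonal (RCLike.ofReal ∘ f ∘ hA.eigenvalues) * W *
      diagonal (RCLike.ofReal ∘ k ∘ hB.eigenvalues) * star W).trace := by
    simp only [Matrix.IsHermitian.cfc, Unitary.conjStarAlgAut_apply, W, star_mul, star_star,
      Matrix.mul_assoc]
    rw [trace_mul_comm]
    simp only [Matrix.mul_assoc]
  rw [hcycle, trace, map_sum]
  refine Finset.sum_congr rfl fun i _ => ?_
  rw [diag_apply, mul_apply, map_sum]
  refine Finset.sum_congr rfl fun j _ => ?_
  have hW : W i j * star (W i j) = (‖W i j‖ : 𝕜) ^ 2 := by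
    rw [RCLike.star_def, RCLike.mul_conj]
  have hentry : (f (hA.eigenvalues i) : 𝕜) * W i j * (k (hB.eigenvalues j) : 𝕜) * star (W i j) =
      ((eigenOverlap hA hB i j * (f (hA.eigenvalues i) * k (hB.eigenvalues j)) : ℝ) : 𝕜) := by
    simp only [eigenOverlap]
    push_cast
    linear_combination (f (hA.eigenvalues i) * k (hB.eigenvalues j) : 𝕜) * hW
  simp only [diagonal_mul, mul_diagonal, star_apply, Function.comp_apply]
  rw [hentry, RCLike.ofReal_re]

lemma re_trace_cfc_mul_cfc_swap (f k : ℝ → ℝ) :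
    RCLike.re (hB.cfc k * hA.cfc f).trace =
      ∑ i, ∑ j, eigenOverlap hA hB i j * (f (hA.eigenvalues i) * k (hB.eigenvalues j)) := by
  rw [trace_mul_comm, re_trace_cfc_mul_cfc]

lemma re_trace_cfc_left (f : ℝ → ℝ) :
    RCLike.re (hA.cfc f).trace = ∑ i, ∑ j, eigenOverlap hA hB i j * f (hA.eigenvalues i) := by
  simpa [hB.cfc_const_one] using re_trace_cfc_mul_cfc hA hB f (fun _ => 1)

lemma re_trace_cfc_right (k : ℝ → ℝ) :
    RCLike.re (hB.cfc k).trace = ∑ i, ∑ j, eigenOverlap hA hB i j * k (hB.eigenvalues j) := by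
  simpa [hA.cfc_const_one] using re_trace_cfc_mul_cfc hA hB (fun _ => 1) k

lemma re_trace_cfc_mul_cfc_mul_cfc (f k l : ℝ → ℝ) :
    RCLike.re (hA.cfc f * hB.cfc k * hA.cfc l).trace =
      ∑ i, ∑ j, eigenOverlap hA hB i j *
        (l (hA.eigenvalues i) * f (hA.eigenvalues i) * k (hB.eigenvalues j)) := by
  rw [trace_mul_cycle, cfc_mul_cfc, re_trace_cfc_mul_cfc]

lemma re_trace_cfc_mul_cfc_mul_cfc_swap (f k l : ℝ → ℝ) :
    RCLike.re (hB.cfc k * hA.cfc f * hB.cfc l).trace =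
      ∑ i, ∑ j, eigenOverlap hA hB i j *
        (f (hA.eigenvalues i) * (l (hB.eigenvalues j) * k (hB.eigenvalues j))) := by
  rw [Matrix.mul_assoc, trace_mul_comm, Matrix.mul_assoc, cfc_mul_cfc, re_trace_cfc_mul_cfc]

lemma re_trace_sub_mul_sub (f k : ℝ → ℝ) :
    RCLike.re ((hA.cfc f - hB.cfc f) * (hA.cfc k - hB.cfc k)).trace =
      ∑ i, ∑ j, eigenOverlap hA hB i j *
        ((f (hA.eigenvalues i) - f (hB.eigenvalues j)) *
          (k (hA.eigenvalues i) - k (hB.eigenvalues j))) := by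
  simp only [sub_mul, mul_sub, trace_sub, map_sub, cfc_mul_cfc, re_trace_cfc_left hA hB,
    re_trace_cfc_right hA hB, re_trace_cfc_mul_cfc hA hB, re_trace_cfc_mul_cfc_swap hA hB,
    ← Finset.sum_sub_distrib]
  exact Finset.sum_congr rfl fun i _ => Finset.sum_congr rfl fun j _ => by ring

lemma re_trace_sub_mul_sub_mul_add (f k l : ℝ → ℝ) :
    RCLike.re ((hA.cfc f - hB.cfc f) * (hA.cfc k - hB.cfc k) * (hA.cfc l + hB.cfc l)).trace =
      ∑ i, ∑ j, eigenOverlap hA hB i j *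
        ((f (hA.eigenvalues i) - f (hB.eigenvalues j)) *
          (k (hA.eigenvalues i) - k (hB.eigenvalues j)) *
          (l (hA.eigenvalues i) + l (hB.eigenvalues j))) := by
  simp only [sub_mul, mul_sub, mul_add, trace_sub, trace_add, map_sub, map_add,
    cfc_mul_cfc, mul_cfc_mul_cfc, re_trace_cfc_left hA hB, re_trace_cfc_right hA hB,
    re_trace_cfc_mul_cfc hA hB, re_trace_cfc_mul_cfc_swap hA hB,
    re_trace_cfc_mul_cfc_mul_cfc hA hB, re_trace_cfc_mul_cfc_mul_cfc_swap hA hB,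
    ← Finset.sum_sub_distrib, ← Finset.sum_add_distrib]
  exact Finset.sum_congr rfl fun i _ => Finset.sum_congr rfl fun j _ => by ring

lemma sum_eigenOverlap_mul_le {I : Set ℝ} (hAI : ∀ i, hA.eigenvalues i ∈ I)
    (hBI : ∀ j, hB.eigenvalues j ∈ I) {F G : ℝ → ℝ → ℝ}
    (hFG : ∀ x ∈ I, ∀ y ∈ I, F x y ≤ G x y) :
    ∑ i, ∑ j, eigenOverlap hA hB i j * F (hA.eigenvalues i) (hB.eigenvalues j) ≤
      ∑ i, ∑ j, eigenOverlap hA hB i j * G (hA.eigenvalues i) (hB.eigenvalues j) :=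
  Finset.sum_le_sum fun i _ => Finset.sum_le_sum fun j _ =>
    mul_le_mul_of_nonneg_left (hFG _ (hAI i) _ (hBI j)) (eigenOverlap_nonneg hA hB i j)

variable {I : Set ℝ} {g h h' : ℝ → ℝ}

lemma half_re_trace_sub_mul_sub_self_mul_add (f l : ℝ → ℝ) :
    1 / 2 * RCLike.re ((hA.cfc f - hB.cfc f) * (A - B) * (hA.cfc l + hB.cfc l)).trace =
      ∑ i, ∑ j, eigenOverlap hA hB i j *
        (1 / 2 * ((f (hA.eigenvalues i) - f (hB.eigenvalues j)) *
          (hA.eigenvalues i - hB.eigenvalues j) * (l (hA.eigenvalues i) + l (hB.eigenvalues j)))) := by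
  have hexpand := re_trace_sub_mul_sub_mul_add hA hB f (fun x => x) l
  rw [hA.cfc_self, hB.cfc_self] at hexpand
  simp only [hexpand, Finset.mul_sum]
  exact Finset.sum_congr rfl fun i _ => Finset.sum_congr rfl fun j _ => by ring

theorem re_trace_le_of_convexOn_deriv (hg : MonotoneOn g I)
    (hderiv : ∀ x ∈ I, HasDerivAt h (h' x) x) (hconv : ConvexOn ℝ I h')
    (hAI : ∀ i, hA.eigenvalues i ∈ I) (hBI : ∀ j, hB.eigenvalues j ∈ I) :
    RCLike.re ((hA.cfc g - hB.cfc g) * (hA.cfc h - hB.cfc h)).trace ≤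
      1 / 2 * RCLike.re ((hA.cfc g - hB.cfc g) * (A - B) * (hA.cfc h' + hB.cfc h')).trace := by
  rw [re_trace_sub_mul_sub, half_re_trace_sub_mul_sub_self_mul_add]
  exact sum_eigenOverlap_mul_le hA hB hAI hBI fun x hx y hy =>
    mul_sub_le_of_convexOn_deriv hg hderiv hconv hx hy

theorem re_trace_ge_of_concaveOn_deriv (hg : MonotoneOn g I)
    (hderiv : ∀ x ∈ I, HasDerivAt h (h' x) x) (hconc : ConcaveOn ℝ I h')
    (hAI : ∀ i, hA.eigenvalues i ∈ I) (hBI : ∀ j, hB.eigenvalues j ∈ I) :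
    1 / 2 * RCLike.re ((hA.cfc g - hB.cfc g) * (A - B) * (hA.cfc h' + hB.cfc h')).trace ≤
      RCLike.re ((hA.cfc g - hB.cfc g) * (hA.cfc h - hB.cfc h)).trace := by
  rw [re_trace_sub_mul_sub, half_re_trace_sub_mul_sub_self_mul_add]
  exact sum_eigenOverlap_mul_le hA hB hAI hBI fun x hx y hy =>
    mul_sub_ge_of_concaveOn_deriv hg hderiv hconc hx hy

end Pairing

end Matrix.IsHermitian

theorem mean_value_trace_inequality_general {d : ℕ} (I : Set ℝ)
    (g h h' : ℝ → ℝ) (hg : MonotoneOn g I)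
    (hderiv : ∀ x ∈ I, HasDerivAt h (h' x) x)
    (A B : Matrix (Fin d) (Fin d) ℂ) (hA : A.IsHermitian) (hB : B.IsHermitian)
    (hAI : ∀ i, hA.eigenvalues i ∈ I) (hBI : ∀ i, hB.eigenvalues i ∈ I) :
    (ConvexOn ℝ I h' →
      (Matrix.trace ((hA.cfc g - hB.cfc g) * (hA.cfc h - hB.cfc h))).re / d
          ≤ (1 / 2) *
            (Matrix.trace ((hA.cfc g - hB.cfc g) * (A - B) * (hA.cfc h' + hB.cfc h'))).re / d ∧
      (Matrix.trace ((hA.cfc g - hB.cfc g) * (hA.cfc h - hB.cfc h))).re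
          ≤ (1 / 2) *
            (Matrix.trace ((hA.cfc g - hB.cfc g) * (A - B) * (hA.cfc h' + hB.cfc h'))).re) ∧
    (ConcaveOn ℝ I h' →
      (1 / 2) * (Matrix.trace ((hA.cfc g - hB.cfc g) * (A - B) * (hA.cfc h' + hB.cfc h'))).re / d
          ≤ (Matrix.trace ((hA.cfc g - hB.cfc g) * (hA.cfc h - hB.cfc h))).re / d ∧
      (1 / 2) * (Matrix.trace ((hA.cfc g - hB.cfc g) * (A - B) * (hA.cfc h' + hB.cfc h'))).re
          ≤ (Matrix.trace ((hA.cfc g - hB.cfc g) * (hA.cfc h - hB.cfc h))).re) := by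
  refine ⟨fun hconv => ?_, fun hconc => ?_⟩
  · have key := hA.re_trace_le_of_convexOn_deriv hB hg hderiv hconv hAI hBI
    simp only [RCLike.re_to_complex] at key
    exact ⟨div_le_div_of_nonneg_right key d.cast_nonneg, key⟩
  · have key := hA.re_trace_ge_of_concaveOn_deriv hB hg hderiv hconc hAI hBI
    simp only [RCLike.re_to_complex] at key
    exact ⟨div_le_div_of_nonneg_right key d.cast_nonneg, key⟩

/-- **Mean Value Trace Inequality.**  Let `I` be an interval, `g : I → ℝ` weakly increasing,
and `h : I → ℝ` with convex derivative `h'`.  For Hermitian `A, B` with eigenvalues in `I`,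
`tr̄[(g(A) - g(B))(h(A) - h(B))] ≤ ½ tr̄[(g(A) - g(B))(A - B)(h'(A) + h'(B))]`;
the inequality reverses when `h'` is concave, and the same holds for the standard trace. -/
theorem mean_value_trace_inequality {d : ℕ} (I : Set ℝ) (hI : I.OrdConnected)
    (g h h' : ℝ → ℝ) (hg : MonotoneOn g I)
    (hderiv : ∀ x ∈ I, HasDerivAt h (h' x) x)
    (A B : Matrix (Fin d) (Fin d) ℂ) (hA : A.IsHermitian) (hB : B.IsHermitian)
    (hAI : ∀ i, hA.eigenvalues i ∈ I) (hBI : ∀ i, hB.eigenvalues i ∈ I) :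
    (ConvexOn ℝ I h' →
      (Matrix.trace ((hA.cfc g - hB.cfc g) * (hA.cfc h - hB.cfc h))).re / d
          ≤ (1 / 2) *
            (Matrix.trace ((hA.cfc g - hB.cfc g) * (A - B) * (hA.cfc h' + hB.cfc h'))).re / d ∧
      (Matrix.trace ((hA.cfc g - hB.cfc g) * (hA.cfc h - hB.cfc h))).re
          ≤ (1 / 2) *
            (Matrix.trace ((hA.cfc g - hB.cfc g) * (A - B) * (hA.cfc h' + hB.cfc h'))).re) ∧
    (ConcaveOn ℝ I h' →
      (1 / 2) * (Matrix.trace ((hA.cfc g - hB.cfc g) * (A - B) * (hA.cfc h' + hB.cfc h'))).re / d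
          ≤ (Matrix.trace ((hA.cfc g - hB.cfc g) * (hA.cfc h - hB.cfc h))).re / d ∧
      (1 / 2) * (Matrix.trace ((hA.cfc g - hB.cfc g) * (A - B) * (hA.cfc h' + hB.cfc h'))).re
          ≤ (Matrix.trace ((hA.cfc g - hB.cfc g) * (hA.cfc h - hB.cfc h))).re) :=
  mean_value_trace_inequality_general I g h h' hg hderiv A B hA hB hAI hBI
end

section
/- Generalized Klein Inequality. Let u_1,…,u_n and v_1,…,v_n be real-valued functions on an interval I of the real line such that Σ_{k=1}^n u_k(a)·v_k(b) ≥ 0 for all a, b ∈ I. Then tr̄[Σ_{k=1}^n u_k(A)·v_k(B)] ≥ 0 for all d×d Hermitian matrices A, B whose eigenvalues lie in I. -/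
open MeasureTheory
open scoped ComplexOrder Classical

/-!
Diagonalize `A = U diag(λ) U*` and `B = V diag(μ) V*` and put `W = U* V`. Then
`tr (f(A) g(B)) = Σ_{p,q} f(λ_p) g(μ_q) |W_pq|²`, so by linearity
`tr Σ_k u_k(A) v_k(B) = Σ_{p,q} (Σ_k u_k(λ_p) v_k(μ_q)) |W_pq|²`,
a sum of nonnegative terms since every `λ_p, μ_q` lies in `I`.
-/

open Matrix

theorem Matrix.trace_conj_diagonal_mul_conj_diagonal {ι R : Type*} [Fintype ι] [DecidableEq ι]
    [CommRing R] [StarRing R] (U V : Matrix ι ι R) (a b : ι → R) :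
    trace (U * diagonal a * star U * (V * diagonal b * star V)) =
      ∑ p, ∑ q, a p * b q * ((star U * V) p q * star ((star U * V) p q)) := by
  have hcycle : trace (U * diagonal a * star U * (V * diagonal b * star V)) =
      trace (diagonal a * (star U * V) * diagonal b * star (star U * V)) := by
    rw [star_mul, star_star]
    simp only [Matrix.mul_assoc]
    rw [trace_mul_comm]
    simp only [Matrix.mul_assoc]
  rw [hcycle, trace]
  generalize star U * V = W
  refine Finset.sum_congr rfl fun p _ => ?_
  rw [diag_apply, mul_apply]
  refine Finset.sum_congr rfl fun q _ => ?_
  rw [mul_diagonal, diagonal_mul, star_apply]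
  ring

namespace Matrix.IsHermitian

variable {n 𝕜 : Type*} [Fintype n] [DecidableEq n] [RCLike 𝕜]
    {A B : Matrix n n 𝕜} (hA : A.IsHermitian) (hB : B.IsHermitian)

theorem trace_cfc_mul_cfc (f g : ℝ → ℝ) :
    trace (hA.cfc f * hB.cfc g) =
      ∑ p, ∑ q, ((f (hA.eigenvalues p) * g (hB.eigenvalues q) *
        ‖(star (hA.eigenvectorUnitary : Matrix n n 𝕜) * hB.eigenvectorUnitary) p q‖ ^ 2 : ℝ) : 𝕜) := by
  simp only [IsHermitian.cfc, Unitary.conjStarAlgAut_apply,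
    trace_conj_diagonal_mul_conj_diagonal, RCLike.star_def, RCLike.mul_conj, Function.comp_apply]
  push_cast
  rfl

theorem trace_sum_cfc_mul_cfc {ι : Type*} [Fintype ι] (u v : ι → ℝ → ℝ) :
    trace (∑ k, hA.cfc (u k) * hB.cfc (v k)) =
      ((∑ p, ∑ q, (∑ k, u k (hA.eigenvalues p) * v k (hB.eigenvalues q)) *
        ‖(star (hA.eigenvectorUnitary : Matrix n n 𝕜) * hB.eigenvectorUnitary) p q‖ ^ 2 : ℝ) : 𝕜) := by
  simp only [trace_sum, trace_cfc_mul_cfc, Finset.sum_mul]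
  push_cast
  rw [Finset.sum_comm]
  exact Finset.sum_congr rfl fun p _ => Finset.sum_comm

end Matrix.IsHermitian

theorem generalized_klein_inequality_general {d n : ℕ} (I : Set ℝ)
    (u v : Fin n → ℝ → ℝ)
    (huv : ∀ a ∈ I, ∀ b ∈ I, 0 ≤ ∑ k, u k a * v k b)
    (A B : Matrix (Fin d) (Fin d) ℂ) (hA : A.IsHermitian) (hB : B.IsHermitian)
    (hAI : ∀ i, hA.eigenvalues i ∈ I) (hBI : ∀ i, hB.eigenvalues i ∈ I) :
    0 ≤ (Matrix.trace (∑ k, hA.cfc (u k) * hB.cfc (v k))).re / d := by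
  rw [hA.trace_sum_cfc_mul_cfc hB, ← RCLike.re_to_complex, RCLike.ofReal_re]
  refine div_nonneg (Finset.sum_nonneg fun p _ => Finset.sum_nonneg fun q _ => ?_) d.cast_nonneg
  exact mul_nonneg (huv _ (hAI p) _ (hBI q)) (sq_nonneg _)

/-- **Generalized Klein Inequality.**  If `Σ_k u_k(a) v_k(b) ≥ 0` for all `a, b` in an
interval `I`, then `tr̄ [Σ_k u_k(A) v_k(B)] ≥ 0` for all Hermitian matrices `A, B`
whose eigenvalues lie in `I`. -/
theorem generalized_klein_inequality {d n : ℕ} (I : Set ℝ) (hI : I.OrdConnected)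
    (u v : Fin n → ℝ → ℝ)
    (huv : ∀ a ∈ I, ∀ b ∈ I, 0 ≤ ∑ k, u k a * v k b)
    (A B : Matrix (Fin d) (Fin d) ℂ) (hA : A.IsHermitian) (hB : B.IsHermitian)
    (hAI : ∀ i, hA.eigenvalues i ∈ I) (hBI : ∀ i, hB.eigenvalues i ∈ I) :
    0 ≤ (Matrix.trace (∑ k, hA.cfc (u k) * hB.cfc (v k))).re / d :=
  generalized_klein_inequality_general I u v huv A B hA hB hAI hBI
end
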